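/- The fractional chromatic number of C_5 ⊠ K_2, the strong product of the 5-cycle with the complete graph on two vertices, equals 5. -/

import Mathlib

open SimpleGraph

/-- The fractional chromatic number, as the infimum of `a/b` over all `(a:b)`-colorings. -/
noncomputable def fracChrom {V : Type*} (G : SimpleGraph V) : ℝ :=
  sInf {r : ℝ | ∃ a b : ℕ, 0 < b ∧
    (∃ ψ : V → Finset (Fin a), (∀ v, b ≤ (ψ v).card) ∧
      ∀ u v, G.Adj u v → Disjoint (ψ u) (ψ v)) ∧ r = a / b}

/-- The square of the 8-cycle. -/
def C8sq : SimpleGraph (ZMod 8) := SimpleGraph.circulantGraph ({1, 2} : Set (ZMod 8))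

instance : DecidablePred (· ∈ ({1, 2} : Set (ZMod 8))) := fun x =>
  decidable_of_iff (x = 1 ∨ x = 2) (by simp)

instance : DecidableRel C8sq.Adj :=
  inferInstanceAs (DecidableRel (SimpleGraph.circulantGraph ({1, 2} : Set (ZMod 8))).Adj)

/-- The strong product of two simple graphs. -/
def strongProd {α β : Type*} (G : SimpleGraph α) (H : SimpleGraph β) :
    SimpleGraph (α × β) where
  Adj x y := x ≠ y ∧ (x.1 = y.1 ∨ G.Adj x.1 y.1) ∧ (x.2 = y.2 ∨ H.Adj x.2 y.2)
  symm := ⟨fun x y h => ⟨h.1.symm, h.2.1.imp Eq.symm (fun a => G.adj_symm a),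
    h.2.2.imp Eq.symm (fun a => H.adj_symm a)⟩⟩
  loopless := ⟨fun x h => h.1 rfl⟩

instance {α β : Type*} [DecidableEq α] [DecidableEq β] (G : SimpleGraph α) (H : SimpleGraph β)
    [DecidableRel G.Adj] [DecidableRel H.Adj] : DecidableRel (strongProd G H).Adj :=
  fun x y => inferInstanceAs
    (Decidable (x ≠ y ∧ (x.1 = y.1 ∨ G.Adj x.1 y.1) ∧ (x.2 = y.2 ∨ H.Adj x.2 y.2)))

/-- The strong product `C₅ ⊠ K₂`. -/
def C5K2 : SimpleGraph (Fin 5 × Fin 2) :=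
  strongProd (SimpleGraph.cycleGraph 5) (⊤ : SimpleGraph (Fin 2))

/-- The independence number of a graph. -/
noncomputable def indepNum {V : Type*} (G : SimpleGraph V) : ℕ :=
  sSup {n | ∃ s : Finset V, s.card = n ∧ ∀ u ∈ s, ∀ v ∈ s, ¬G.Adj u v}

/-!
A colour class of an `(a:b)`-colouring is an independent set, so double counting the pairs
(vertex, colour) gives `|V| b ≤ a α` whenever every independent set has at most `α` vertices,
i.e. `|V| / α ≤ a / b`. In `C₅ ⊠ K₂` among any three vertices two are adjacent, so `α = 2` and
`χ_f ≥ 10 / 2 = 5`; the colouring `(i, j) ↦ 2i + j mod 5` is proper, so `χ_f ≤ 5`.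
-/

open Finset

namespace SimpleGraph

variable {V : Type*} {G : SimpleGraph V}

lemma fracChrom_le_of_fracColoring {a b : ℕ} (hb : 0 < b) (ψ : V → Finset (Fin a))
    (hψ : ∀ v, b ≤ #(ψ v)) (hadj : ∀ u v, G.Adj u v → Disjoint (ψ u) (ψ v)) :
    fracChrom G ≤ a / b :=
  csInf_le ⟨0, by rintro _ ⟨a, b, -, -, rfl⟩; positivity⟩ ⟨a, b, hb, ⟨ψ, hψ, hadj⟩, rfl⟩

lemma fracChrom_le_of_coloring {k : ℕ} (C : G.Coloring (Fin k)) : fracChrom G ≤ k := by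
  simpa using fracChrom_le_of_fracColoring (G := G) one_pos (fun v => {C v}) (fun v => by simp)
    fun u v huv => disjoint_singleton.mpr (C.valid huv)

lemma card_mul_le_mul_of_fracColoring [Fintype V] {α a b : ℕ}
    (hα : ∀ s : Finset V, G.IsIndepSet s → #s ≤ α) (ψ : V → Finset (Fin a))
    (hψ : ∀ v, b ≤ #(ψ v)) (hadj : ∀ u v, G.Adj u v → Disjoint (ψ u) (ψ v)) :
    Fintype.card V * b ≤ a * α := by
  classical
  have hcolourClass (c : Fin a) : G.IsIndepSet ↑(univ.filter fun v => c ∈ ψ v) := by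
    intro u hu v hv _ huv
    simp only [coe_filter, mem_univ, true_and, Set.mem_ofPred_eq] at hu hv
    exact Finset.disjoint_left.mp (hadj u v huv) hu hv
  simpa using card_mul_le_card_mul (fun v c => c ∈ ψ v) (s := univ) (t := univ)
    (fun v _ => by simpa [bipartiteAbove] using hψ v)
    (fun c _ => hα _ (hcolourClass c))

lemma card_div_le_fracChrom [Fintype V] {α : ℕ}
    (hα : ∀ s : Finset V, G.IsIndepSet s → #s ≤ α) : (Fintype.card V : ℝ) / α ≤ fracChrom G := by
  refine le_csInf ⟨_, Fintype.card V, 1, one_pos,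
    ⟨fun v => {Fintype.equivFin V v}, fun v => by simp, fun u v huv => by simpa using huv.ne⟩,
    rfl⟩ ?_
  rintro _ ⟨a, b, hb, ⟨ψ, hψ, hadj⟩, rfl⟩
  rcases Nat.eq_zero_or_pos α with rfl | hα₀
  · simp only [Nat.cast_zero, div_zero]
    positivity
  rw [div_le_div_iff₀ (by positivity) (by positivity)]
  exact_mod_cast card_mul_le_mul_of_fracColoring hα ψ hψ hadj

end SimpleGraph

open SimpleGraph

instance : DecidableRel C5K2.Adj :=
  inferInstanceAs (DecidableRel (strongProd (cycleGraph 5) (⊤ : SimpleGraph (Fin 2))).Adj)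

lemma C5K2_adj_of_three_ne : ∀ u v w : Fin 5 × Fin 2, u ≠ v → u ≠ w → v ≠ w →
    C5K2.Adj u v ∨ C5K2.Adj u w ∨ C5K2.Adj v w := by
  decide

lemma C5K2_isIndepSet_card_le_two (s : Finset (Fin 5 × Fin 2)) (hs : C5K2.IsIndepSet s) :
    #s ≤ 2 := by
  by_contra! hlt
  obtain ⟨u, hu, v, hv, w, hw, huv, huw, hvw⟩ := two_lt_card.mp hlt
  rcases C5K2_adj_of_three_ne u v w huv huw hvw with h | h | h
  exacts [hs hu hv huv h, hs hu hw huw h, hs hv hw hvw h]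

def C5K2_coloring : C5K2.Coloring (Fin 5) :=
  Coloring.mk (fun p => Fin.ofNat 5 (2 * p.1.val + p.2.val)) (by decide)

/-- The fractional chromatic number of `C₅ ⊠ K₂` equals 5. -/
theorem fracChrom_C5K2 : fracChrom C5K2 = 5 := by
  refine le_antisymm (by simpa using fracChrom_le_of_coloring C5K2_coloring) ?_
  calc (5 : ℝ) = Fintype.card (Fin 5 × Fin 2) / 2 := by norm_num
    _ ≤ fracChrom C5K2 := card_div_le_fracChrom C5K2_isIndepSet_card_le_two
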